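/- Let G be a directed graph and X, Y ⊆ V(G) disjoint nonempty sets. For every integer p ≥ 0, the number of important X–Y separators of size at most p is at most 4^p. More precisely, if λ is the minimum size of an X–Y separator, the number of important X–Y separators of size at most p is at most 2^(2p−λ). -/

import Mathlib

variable {V : Type*}

/-- A single edge step in `G \ S`: an edge of `E` with both endpoints outside `S`. -/
def DStep (E : V → V → Prop) (S : Set V) (a b : V) : Prop :=
  E a b ∧ a ∉ S ∧ b ∉ S

/-- `b` is reachable from `a` by a directed path in `G \ S`. -/
def DReach (E : V → V → Prop) (S : Set V) (a b : V) : Prop :=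
  Relation.ReflTransGen (DStep E S) a b

/-- The set of vertices reachable from the set `X` in `G \ S`. -/
def RSet (E : V → V → Prop) (S X : Set V) : Set V :=
  {v | ∃ x ∈ X, DReach E S x v}

/-- `S` is an `X`–`Y` separator: disjoint from `X ∪ Y` and destroying all `X → Y` paths. -/
def IsSep (E : V → V → Prop) (X Y S : Set V) : Prop :=
  S ∩ (X ∪ Y) = ∅ ∧ ∀ x ∈ X, ∀ y ∈ Y, ¬ DReach E S x y

/-- `S` is an inclusion-wise minimal `X`–`Y` separator. -/
def IsMinSep (E : V → V → Prop) (X Y S : Set V) : Prop :=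
  IsSep E X Y S ∧ ∀ S', S' ⊂ S → ¬ IsSep E X Y S'

/-- `S` is an important `X`–`Y` separator: a minimal separator such that no separator of at
most the same size has a strictly larger set of vertices reachable from `X`. -/
def IsImpSep (E : V → V → Prop) (X Y S : Set V) : Prop :=
  IsMinSep E X Y S ∧
    ¬ ∃ S', IsSep E X Y S' ∧ S'.ncard ≤ S.ncard ∧ RSet E S X ⊂ RSet E S' X

/-- `S` is a (vertex) multiway cut of `(G, T)`. -/
def IsMWC (E : V → V → Prop) (T S : Set V) : Prop :=
  S ∩ T = ∅ ∧ ∀ t₁ ∈ T, ∀ t₂ ∈ T, t₁ ≠ t₂ → ¬ DReach E S t₁ t₂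

/-- The forward shadow of `S` with respect to `T`: vertices outside `S ∪ T` not reachable
from `T` in `G \ S`. -/
def fShadow (E : V → V → Prop) (T S : Set V) : Set V :=
  {v | v ∉ S ∧ v ∉ T ∧ ∀ t ∈ T, ¬ DReach E S t v}

/-- The reverse shadow of `S` with respect to `T`: vertices outside `S ∪ T` that cannot
reach `T` in `G \ S`. -/
def rShadow (E : V → V → Prop) (T S : Set V) : Set V :=
  {v | v ∉ S ∧ v ∉ T ∧ ∀ t ∈ T, ¬ DReach E S v t}

/-- The adjacency of `torso(G, C)`: an edge `(a, b)` whenever `a, b ∈ C` and `G` has a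
directed `a → b` path whose internal vertices all lie outside `C`. -/
def TorsoAdj (E : V → V → Prop) (C : Set V) (a b : V) : Prop :=
  a ∈ C ∧ b ∈ C ∧ ∃ w, E a w ∧ Relation.ReflTransGen (fun x y => x ∉ C ∧ E x y) w b

/-- `S` is an `X`–`Y` separator avoiding the forbidden (undeletable) set `W`. -/
def IsSepF (E : V → V → Prop) (W X Y S : Set V) : Prop :=
  S ∩ (X ∪ Y ∪ W) = ∅ ∧ ∀ x ∈ X, ∀ y ∈ Y, ¬ DReach E S x y

/-- Minimal `X`–`Y` separator avoiding `W`. -/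
def IsMinSepF (E : V → V → Prop) (W X Y S : Set V) : Prop :=
  IsSepF E W X Y S ∧ ∀ S', S' ⊂ S → ¬ IsSepF E W X Y S'

/-- Important `X`–`Y` separator avoiding `W`. -/
def IsImpSepF (E : V → V → Prop) (W X Y S : Set V) : Prop :=
  IsMinSepF E W X Y S ∧
    ¬ ∃ S', IsSepF E W X Y S' ∧ S'.ncard ≤ S.ncard ∧ RSet E S X ⊂ RSet E S' X

/-! Induction on `2p − λ`. Among the minimum separators take one, `Sm`, reaching as much as
possible; by submodularity of `R ↦ |N⁺(R)|` every important separator reaches everything `Sm`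
reaches. Pick `v ∈ Sm`; it has an in-neighbour reached from `X`. Important separators containing
`v` are, after removing `v`, important separators of size `≤ p − 1` in `G − v`, where `λ` drops
by at most one. Those avoiding `v` stay important when `v` and everything `Sm` reaches are added
to `X`, and then `λ` grows by at least one (this is where the choice of `Sm` enters). In both
branches `2p − λ` decreases, so each contributes at most `2^(2p − λ − 1)`. -/

def outNbhd (E : V → V → Prop) (R : Set V) : Set V := {w | w ∉ R ∧ ∃ u ∈ R, E u w}

def deleteVertex (E : V → V → Prop) (v a b : V) : Prop := E a b ∧ a ≠ v ∧ b ≠ v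

def importantSeps (E : V → V → Prop) (W X Y : Set V) (p : ℕ) : Set (Set V) :=
  {S | IsImpSepF E W X Y S ∧ S.ncard ≤ p}

open Set

section Reach

variable {E : V → V → Prop} {S T X X' R : Set V} {u v w : V}

lemma mem_rSet_of_mem (hv : v ∈ X) : v ∈ RSet E S X := ⟨v, hv, .refl⟩

lemma subset_rSet : X ⊆ RSet E S X := fun _ => mem_rSet_of_mem

lemma mem_rSet_of_dReach (hv : v ∈ RSet E S X) (h : DReach E S v w) : w ∈ RSet E S X := by
  obtain ⟨x, hx, hxv⟩ := hv
  exact ⟨x, hx, hxv.trans h⟩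

lemma mem_rSet_of_adj (hu : u ∈ RSet E S X) (huv : E u v) (huS : u ∉ S) (hvS : v ∉ S) :
    v ∈ RSet E S X :=
  mem_rSet_of_dReach hu (.single ⟨huv, huS, hvS⟩)

lemma rSet_subset_of_subset_rSet (h : X' ⊆ RSet E S X) : RSet E S X' ⊆ RSet E S X := by
  rintro w ⟨x', hx', hr⟩
  exact mem_rSet_of_dReach (h hx') hr

lemma rSet_mono (h : X ⊆ X') : RSet E S X ⊆ RSet E S X' := by
  rintro w ⟨x, hx, hr⟩
  exact ⟨x, h hx, hr⟩

lemma rSet_anti (h : T ⊆ S) : RSet E S X ⊆ RSet E T X := by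
  rintro w ⟨x, hx, hr⟩
  exact ⟨x, hx, Relation.ReflTransGen.mono (fun _ _ hab => ⟨hab.1, fun ha => hab.2.1 (h ha),
    fun hb => hab.2.2 (h hb)⟩) _ _ hr⟩

lemma rSet_subset_of_closed (hXR : X ⊆ R)
    (hR : ∀ u ∈ R, ∀ w, E u w → w ∉ S → w ∈ R) : RSet E S X ⊆ R := by
  rintro w ⟨x, hx, hr⟩
  induction hr with
  | refl => exact hXR hx
  | tail _ hstep ih => exact hR _ ih _ hstep.1 hstep.2.2

lemma disjoint_rSet (h : Disjoint X S) : Disjoint (RSet E S X) S := by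
  refine disjoint_left.2 ?_
  rintro w ⟨x, hx, hr⟩
  induction hr with
  | refl => exact disjoint_left.1 h hx
  | tail _ hstep => exact hstep.2.2

lemma rSet_subset_rSet_of_disjoint (h : Disjoint (RSet E S X) T) : RSet E S X ⊆ RSet E T X := by
  rintro w ⟨x, hx, hr⟩
  induction hr with
  | refl => exact mem_rSet_of_mem hx
  | @tail a b hxa hstep ih =>
    exact mem_rSet_of_adj ih hstep.1 (disjoint_left.1 h ⟨x, hx, hxa⟩)
      (disjoint_left.1 h ⟨x, hx, hxa.tail hstep⟩)

lemma rSet_eq_of_subset_rSet (hXX' : X ⊆ X') (h : X' ⊆ RSet E S X) : RSet E S X' = RSet E S X :=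
  (rSet_subset_of_subset_rSet h).antisymm (rSet_mono hXX')

lemma insert_rSet_subset_rSet_compl (hu : u ∈ RSet E S X) (huv : E u v) :
    insert v (RSet E S X) ⊆ RSet E (insert v (RSet E S X))ᶜ X := by
  have hR : RSet E S X ⊆ RSet E (insert v (RSet E S X))ᶜ X :=
    rSet_subset_rSet_of_disjoint (disjoint_compl_right.mono_left (subset_insert _ _))
  exact insert_subset (mem_rSet_of_adj (hR hu) huv (not_not.2 (mem_insert_of_mem v hu))
    (not_not.2 (mem_insert v _))) hR

end Reach

section OutNbhd

variable {E : V → V → Prop} {S X R R₁ R₂ : Set V}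

lemma disjoint_outNbhd : Disjoint R (outNbhd E R) :=
  disjoint_right.2 fun _ hw => hw.1

lemma outNbhd_rSet_subset (h : Disjoint X S) : outNbhd E (RSet E S X) ⊆ S := by
  rintro w ⟨hwR, u, hu, huw⟩
  by_contra hwS
  exact hwR (mem_rSet_of_adj hu huw (disjoint_left.1 (disjoint_rSet h) hu) hwS)

lemma rSet_outNbhd_subset (h : X ⊆ R) : RSet E (outNbhd E R) X ⊆ R :=
  rSet_subset_of_closed h fun u hu w huw hw => by
    by_contra hwR
    exact hw ⟨hwR, u, hu, huw⟩

lemma outNbhd_union_union_outNbhd_inter_subset :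
    outNbhd E (R₁ ∪ R₂) ∪ outNbhd E (R₁ ∩ R₂) ⊆
      outNbhd E R₁ ∪ outNbhd E R₂ := by
  rintro w (⟨hw, u, hu | hu, huw⟩ | ⟨hw, u, hu, huw⟩)
  · exact Or.inl ⟨fun h => hw (Or.inl h), u, hu, huw⟩
  · exact Or.inr ⟨fun h => hw (Or.inr h), u, hu, huw⟩
  · by_cases h₁ : w ∈ R₁
    · exact Or.inr ⟨fun h₂ => hw ⟨h₁, h₂⟩, u, hu.2, huw⟩
    · exact Or.inl ⟨h₁, u, hu.1, huw⟩

lemma outNbhd_union_inter_outNbhd_inter_subset :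
    outNbhd E (R₁ ∪ R₂) ∩ outNbhd E (R₁ ∩ R₂) ⊆
      outNbhd E R₁ ∩ outNbhd E R₂ := by
  rintro w ⟨⟨hw, -⟩, -, u, hu, huw⟩
  exact ⟨⟨fun h => hw (Or.inl h), u, hu.1, huw⟩, ⟨fun h => hw (Or.inr h), u, hu.2, huw⟩⟩

lemma ncard_outNbhd_union_add_ncard_outNbhd_inter_le [Finite V] (E : V → V → Prop)
    (R₁ R₂ : Set V) :
    (outNbhd E (R₁ ∪ R₂)).ncard + (outNbhd E (R₁ ∩ R₂)).ncard ≤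
      (outNbhd E R₁).ncard + (outNbhd E R₂).ncard := by
  rw [← ncard_union_add_ncard_inter (outNbhd E (R₁ ∪ R₂)),
    ← ncard_union_add_ncard_inter (outNbhd E R₁)]
  exact add_le_add (ncard_le_ncard outNbhd_union_union_outNbhd_inter_subset)
    (ncard_le_ncard outNbhd_union_inter_outNbhd_inter_subset)

end OutNbhd

section Separators

variable {E : V → V → Prop} {W X X' Y S T R : Set V} {v : V}

lemma IsSepF.disjoint (hS : IsSepF E W X Y S) : Disjoint S (X ∪ Y ∪ W) :=
  disjoint_iff_inter_eq_empty.2 hS.1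

lemma IsSepF.disjoint_source (hS : IsSepF E W X Y S) : Disjoint X S :=
  (hS.disjoint.mono_right (subset_union_left.trans subset_union_left)).symm

lemma IsSepF.rSet_disjoint (hS : IsSepF E W X Y S) : Disjoint (RSet E S X) S :=
  disjoint_rSet hS.disjoint_source

lemma IsSepF.rSet_disjoint_target (hS : IsSepF E W X Y S) : Disjoint (RSet E S X) Y :=
  Set.disjoint_left.2 fun _ ⟨x, hx, hr⟩ hy => hS.2 x hx _ hy hr

lemma isSepF_outNbhd (hXR : X ⊆ R) (hRY : Disjoint R Y)
    (hd : Disjoint (outNbhd E R) (X ∪ Y ∪ W)) :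
    IsSepF E W X Y (outNbhd E R) :=
  ⟨disjoint_iff_inter_eq_empty.1 hd, fun x hx _ hy hr =>
    disjoint_left.1 hRY (rSet_outNbhd_subset hXR ⟨x, hx, hr⟩) hy⟩

lemma IsSepF.mono_left (hT : IsSepF E W X' Y T) (h : X ⊆ X') : IsSepF E W X Y T :=
  ⟨disjoint_iff_inter_eq_empty.1 (hT.disjoint.mono_right (by gcongr)),
    fun x hx => hT.2 x (h hx)⟩

lemma IsMinSepF.outNbhd_rSet_eq (hS : IsMinSepF E W X Y S) : outNbhd E (RSet E S X) = S := by
  have hsub := outNbhd_rSet_subset (E := E) hS.1.disjoint_source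
  have hsep : IsSepF E W X Y (outNbhd E (RSet E S X)) :=
    isSepF_outNbhd subset_rSet hS.1.rSet_disjoint_target (hS.1.disjoint.mono_left hsub)
  exact (hsub.eq_or_ssubset).resolve_right fun hlt => hS.2 _ hlt hsep

lemma IsMinSepF.eq_empty (hS : IsMinSepF E W X Y S) (h : IsSepF E W X Y ∅) : S = ∅ :=
  (empty_subset S).eq_or_ssubset.elim Eq.symm fun hlt => (hS.2 _ hlt h).elim

lemma exists_isImpSepF_forall_ncard_le [Finite V] (h : ∃ S, IsSepF E W X Y S) :
    ∃ Sm, IsImpSepF E W X Y Sm ∧ ∀ T, IsSepF E W X Y T → Sm.ncard ≤ T.ncard := by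
  obtain ⟨S₀, hS₀, hS₀min⟩ :=
    (toFinite {S | IsSepF E W X Y S}).exists_minimalFor ncard _ h
  have hmin : ∀ T, IsSepF E W X Y T → S₀.ncard ≤ T.ncard := fun T hT =>
    (le_total S₀.ncard T.ncard).elim id (hS₀min hT)
  obtain ⟨Sm, ⟨hSm, hcard⟩, hSmax⟩ :=
    (toFinite {S | IsSepF E W X Y S ∧ S.ncard = S₀.ncard}).exists_maximalFor
      (fun S => (RSet E S X).ncard) _ ⟨S₀, hS₀, rfl⟩
  refine ⟨Sm, ⟨⟨hSm, fun T hlt hT => ?_⟩, ?_⟩, hcard ▸ hmin⟩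
  · exact (ncard_lt_ncard hlt).not_ge (hcard ▸ hmin T hT)
  · rintro ⟨T, hT, hle, hlt⟩
    have hT₀ : T.ncard = S₀.ncard := le_antisymm (hcard ▸ hle) (hmin T hT)
    exact (ncard_lt_ncard hlt).not_ge (hSmax ⟨hT, hT₀⟩ (ncard_lt_ncard hlt).le)

/-- Uncrossing with a minimum separator `T`: `N⁺(R(S) ∪ R(T))` is no larger than `S`. -/
lemma IsImpSepF.rSet_subset [Finite V] (hS : IsImpSepF E W X Y S) (hT : IsSepF E W X Y T)
    (hmin : ∀ U, IsSepF E W X Y U → T.ncard ≤ U.ncard) : RSet E T X ⊆ RSet E S X := by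
  set R₁ := RSet E S X
  set R₂ := RSet E T X
  have hS₁ : outNbhd E R₁ ⊆ S := outNbhd_rSet_subset hS.1.1.disjoint_source
  have hT₂ : outNbhd E R₂ ⊆ T := outNbhd_rSet_subset hT.disjoint_source
  have hd : Disjoint (outNbhd E R₁ ∪ outNbhd E R₂) (X ∪ Y ∪ W) :=
    (hS.1.1.disjoint.union_left hT.disjoint).mono_left (union_subset_union hS₁ hT₂)
  have hX : X ⊆ R₁ ∩ R₂ := subset_inter subset_rSet subset_rSet
  have hunion : IsSepF E W X Y (outNbhd E (R₁ ∪ R₂)) :=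
    isSepF_outNbhd (subset_rSet.trans subset_union_left)
      (hS.1.1.rSet_disjoint_target.union_left hT.rSet_disjoint_target)
      (hd.mono_left (subset_union_left.trans outNbhd_union_union_outNbhd_inter_subset))
  have hinter : IsSepF E W X Y (outNbhd E (R₁ ∩ R₂)) :=
    isSepF_outNbhd hX (hS.1.1.rSet_disjoint_target.mono_left inter_subset_left)
      (hd.mono_left (subset_union_right.trans outNbhd_union_union_outNbhd_inter_subset))
  have hcard : (outNbhd E (R₁ ∪ R₂)).ncard ≤ S.ncard := by
    have := ncard_outNbhd_union_add_ncard_outNbhd_inter_le E R₁ R₂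
    have := ncard_le_ncard hS₁
    have := ncard_le_ncard hT₂
    have := hmin _ hinter
    omega
  have hreach : R₁ ∪ R₂ ⊆ RSet E (outNbhd E (R₁ ∪ R₂)) X :=
    union_subset (rSet_subset_rSet_of_disjoint (disjoint_outNbhd.mono_left subset_union_left))
      (rSet_subset_rSet_of_disjoint (disjoint_outNbhd.mono_left subset_union_right))
  by_contra hsub
  exact hS.2 ⟨_, hunion, hcard, (subset_union_left.trans hreach).ssubset_of_not_superset
    fun h => hsub (subset_union_right.trans (hreach.trans h))⟩

lemma dStep_deleteVertex : DStep (deleteVertex E v) T = DStep E (insert v T) := by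
  ext a b
  simp only [DStep, deleteVertex, mem_insert_iff]
  tauto

lemma rSet_deleteVertex : RSet (deleteVertex E v) T X = RSet E (insert v T) X := by
  simp only [RSet, DReach, dStep_deleteVertex]

lemma isSepF_deleteVertex_iff (hv : v ∉ X ∪ Y ∪ W) :
    IsSepF (deleteVertex E v) W X Y T ↔ IsSepF E W X Y (insert v T) := by
  simp only [IsSepF, DReach, dStep_deleteVertex, insert_inter_of_notMem hv]

lemma IsImpSepF.deleteVertex [Finite V] (hS : IsImpSepF E W X Y S) (hv : v ∈ S) :
    IsImpSepF (deleteVertex E v) W X Y (S \ {v}) := by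
  have hsep := fun T =>
    isSepF_deleteVertex_iff (E := E) (T := T) (disjoint_left.1 hS.1.1.disjoint hv)
  have hins : insert v (S \ {v}) = S := by rw [insert_sdiff_singleton, insert_eq_of_mem hv]
  have hcard : (S \ {v}).ncard + 1 = S.ncard := ncard_sdiff_singleton_add_one hv
  refine ⟨⟨(hsep _).2 (by rw [hins]; exact hS.1.1),
    fun T hlt hT => hS.1.2 _ ?_ ((hsep T).1 hT)⟩, ?_⟩
  · obtain ⟨w, ⟨hwS, hwv⟩, hwT⟩ := exists_of_ssubset hlt
    refine (insert_subset hv (hlt.subset.trans sdiff_subset)).ssubset_of_not_superset fun h => ?_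
    exact (h hwS).elim (fun h => hwv h) hwT
  · rintro ⟨T, hT, hle, hlt⟩
    refine hS.2 ⟨insert v T, (hsep T).1 hT, (ncard_insert_le v T).trans (by omega), ?_⟩
    rwa [rSet_deleteVertex, rSet_deleteVertex, hins] at hlt

lemma IsSepF.of_subset_rSet (hS : IsSepF E W X Y S) (hX'S : X' ⊆ RSet E S X) :
    IsSepF E W X' Y S := by
  refine ⟨disjoint_iff_inter_eq_empty.1 ?_, fun x hx y hy hr =>
    disjoint_left.1 hS.rSet_disjoint_target (mem_rSet_of_dReach (hX'S hx) hr) hy⟩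
  refine disjoint_union_right.2 ⟨disjoint_union_right.2 ⟨?_, ?_⟩, ?_⟩
  · exact (hS.rSet_disjoint.mono_left hX'S).symm
  · exact hS.disjoint.mono_right (subset_union_right.trans subset_union_left)
  · exact hS.disjoint.mono_right subset_union_right

lemma IsImpSepF.of_subset_rSet (hS : IsImpSepF E W X Y S) (hXX' : X ⊆ X')
    (hX'S : X' ⊆ RSet E S X) (hX' : X' ⊆ RSet E X'ᶜ X) : IsImpSepF E W X' Y S := by
  refine ⟨⟨hS.1.1.of_subset_rSet hX'S,
    fun T hlt hT => hS.1.2 T hlt (hT.mono_left hXX')⟩, ?_⟩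
  rintro ⟨T, hT, hle, hlt⟩
  have hX'T : X' ⊆ RSet E T X :=
    hX'.trans (rSet_anti (subset_compl_iff_disjoint_left.2 hT.disjoint_source))
  rw [rSet_eq_of_subset_rSet hXX' hX'S, rSet_eq_of_subset_rSet hXX' hX'T] at hlt
  exact hS.2 ⟨T, hT.mono_left hXX', hle, hlt⟩

end Separators

section Counting

variable {E : V → V → Prop} {W X Y Sm T : Set V} {p lam : ℕ} {u v : V}

lemma importantSeps_eq_empty_of_lt (hlam : ∀ S, IsSepF E W X Y S → lam ≤ S.ncard)
    (hp : p < lam) :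
    importantSeps E W X Y p = ∅ :=
  eq_empty_of_forall_notMem fun S hS => (hp.trans_le (hlam S hS.1.1.1)).not_ge hS.2

lemma ncard_importantSeps_le_one (h : IsSepF E W X Y ∅) : (importantSeps E W X Y p).ncard ≤ 1 :=
  (ncard_le_ncard (t := {∅}) fun S hS => hS.1.1.eq_empty h).trans (ncard_singleton _).le

lemma ncard_importantSeps_le_add [Finite V] (hSm : IsImpSepF E W X Y Sm)
    (hmin : ∀ T, IsSepF E W X Y T → Sm.ncard ≤ T.ncard) (hu : u ∈ RSet E Sm X)
    (huv : E u v) :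
    (importantSeps E W X Y p).ncard ≤ (importantSeps (deleteVertex E v) W X Y (p - 1)).ncard +
      (importantSeps E W (insert v (RSet E Sm X)) Y p).ncard := by
  rw [← ncard_inter_add_ncard_sdiff_eq_ncard (importantSeps E W X Y p) {S | v ∈ S}]
  refine add_le_add (ncard_le_ncard_of_injOn (· \ {v}) ?_ ?_) (ncard_le_ncard ?_)
  · rintro S ⟨⟨hS, hp⟩, hv : v ∈ S⟩
    exact ⟨hS.deleteVertex hv, by have := ncard_sdiff_singleton_add_one hv; omega⟩
  · rintro S₁ ⟨-, hv₁ : v ∈ S₁⟩ S₂ ⟨-, hv₂ : v ∈ S₂⟩ h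
    simpa only [insert_sdiff_singleton, insert_eq_of_mem hv₁, insert_eq_of_mem hv₂]
      using congrArg (insert v) h
  · rintro S ⟨⟨hS, hp⟩, hv : v ∉ S⟩
    have hR := hS.rSet_subset hSm.1.1 hmin
    have hvS : v ∈ RSet E S X :=
      mem_rSet_of_adj (hR hu) huv (disjoint_left.1 hS.1.1.rSet_disjoint (hR hu)) hv
    exact ⟨hS.of_subset_rSet (subset_rSet.trans (subset_insert _ _)) (insert_subset hvS hR)
      (insert_rSet_subset_rSet_compl hu huv), hp⟩

lemma le_ncard_add_one_of_isSepF_deleteVertex (hSm : IsSepF E W X Y Sm)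
    (hmin : ∀ T, IsSepF E W X Y T → Sm.ncard ≤ T.ncard) (hv : v ∈ Sm)
    (hT : IsSepF (deleteVertex E v) W X Y T) :
    Sm.ncard ≤ T.ncard + 1 :=
  (hmin _ ((isSepF_deleteVertex_iff (disjoint_left.1 hSm.disjoint hv)).1 hT)).trans
    (ncard_insert_le v T)

lemma ncard_lt_of_isSepF_insert_rSet [Finite V] (hSm : IsImpSepF E W X Y Sm) (hv : v ∈ Sm)
    (hu : u ∈ RSet E Sm X) (huv : E u v) (hT : IsSepF E W (insert v (RSet E Sm X)) Y T) :
    Sm.ncard < T.ncard := by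
  by_contra! hle
  have hX'T : insert v (RSet E Sm X) ⊆ RSet E T X :=
    (insert_rSet_subset_rSet_compl hu huv).trans
      (rSet_anti (subset_compl_iff_disjoint_left.2 hT.disjoint_source))
  have hvR : v ∉ RSet E Sm X := disjoint_right.1 hSm.1.1.rSet_disjoint hv
  exact hSm.2 ⟨T, hT.mono_left (subset_rSet.trans (subset_insert _ _)), hle,
    ((subset_insert _ _).trans hX'T).ssubset_of_not_superset
      fun h => hvR (h (hX'T (mem_insert _ _)))⟩

theorem ncard_importantSeps_le [Finite V] (E : V → V → Prop) (W X Y : Set V) (p lam : ℕ)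
    (hlam : ∀ S, IsSepF E W X Y S → lam ≤ S.ncard) :
    (importantSeps E W X Y p).ncard ≤ 2 ^ (2 * p - lam) := by
  by_cases hsep : ∃ S, IsSepF E W X Y S
  swap
  · simp [importantSeps_eq_empty_of_lt (fun S hS => (hsep ⟨S, hS⟩).elim) (lt_add_one p)]
  obtain ⟨Sm, hSm, hmin⟩ := exists_isImpSepF_forall_ncard_le hsep
  have hlamSm : lam ≤ Sm.ncard := hlam Sm hSm.1.1
  refine le_trans ?_ (Nat.pow_le_pow_right two_pos (Nat.sub_le_sub_left hlamSm _))
  obtain hp | hp := lt_or_ge p Sm.ncard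
  · simp [importantSeps_eq_empty_of_lt hmin hp]
  obtain rfl | ⟨v, hv⟩ := Sm.eq_empty_or_nonempty
  · exact (ncard_importantSeps_le_one hSm.1.1).trans Nat.one_le_two_pow
  have hpos : 0 < Sm.ncard := (ncard_pos (toFinite Sm)).2 ⟨v, hv⟩
  obtain ⟨-, u, hu, huv⟩ : v ∈ outNbhd E (RSet E Sm X) := by rwa [hSm.1.outNbhd_rSet_eq]
  have hA := ncard_importantSeps_le (deleteVertex E v) W X Y (p - 1) (Sm.ncard - 1)
    fun T hT => Nat.sub_le_of_le_add (le_ncard_add_one_of_isSepF_deleteVertex hSm.1.1 hmin hv hT)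
  have hB := ncard_importantSeps_le E W (insert v (RSet E Sm X)) Y p (Sm.ncard + 1)
    fun T hT => ncard_lt_of_isSepF_insert_rSet hSm hv hu huv hT
  rw [show 2 * (p - 1) - (Sm.ncard - 1) = 2 * p - Sm.ncard - 1 by omega] at hA
  rw [show 2 * p - (Sm.ncard + 1) = 2 * p - Sm.ncard - 1 by omega] at hB
  calc _ ≤ _ := ncard_importantSeps_le_add hSm hmin hu huv
    _ ≤ 2 ^ (2 * p - Sm.ncard - 1) + 2 ^ (2 * p - Sm.ncard - 1) := add_le_add hA hB
    _ = 2 ^ (2 * p - Sm.ncard) := by rw [← two_mul, ← pow_succ']; congr 1; omega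
termination_by 2 * p - lam
decreasing_by all_goals omega

end Counting

theorem count_important_separators_general [Fintype V]
    (E : V → V → Prop) (W X Y : Set V)
    (p lam : ℕ)
    (hlam₂ : ∀ S, IsSepF E W X Y S → lam ≤ S.ncard) :
    {S : Set V | IsImpSepF E W X Y S ∧ S.ncard ≤ p}.ncard ≤ 2 ^ (2 * p - lam) ∧
      {S : Set V | IsImpSepF E W X Y S ∧ S.ncard ≤ p}.ncard ≤ 4 ^ p := by
  have h := ncard_importantSeps_le E W X Y p lam hlam₂
  refine ⟨h, h.trans ?_⟩
  calc 2 ^ (2 * p - lam) ≤ 2 ^ (2 * p) := Nat.pow_le_pow_right two_pos (Nat.sub_le _ _)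
    _ = 4 ^ p := by rw [pow_mul]; norm_num

/-- If `lam` is the minimum size of an `X`–`Y` separator, then the number
of important `X`–`Y` separators of size at most `p` is at most `2^(2p − lam)`, and in
particular at most `4^p`. -/
theorem count_important_separators [Fintype V]
    (E : V → V → Prop) (W X Y : Set V)
    (hX : X.Nonempty) (hY : Y.Nonempty) (hXY : Disjoint X Y)
    (p lam : ℕ)
    (hlam₁ : ∃ S, IsSepF E W X Y S ∧ S.ncard = lam)
    (hlam₂ : ∀ S, IsSepF E W X Y S → lam ≤ S.ncard) :
    {S : Set V | IsImpSepF E W X Y S ∧ S.ncard ≤ p}.ncard ≤ 2 ^ (2 * p - lam) ∧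
      {S : Set V | IsImpSepF E W X Y S ∧ S.ncard ≤ p}.ncard ≤ 4 ^ p :=
  count_important_separators_general E W X Y p lam hlam₂
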